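/- Let n ≥ 0, let X ⊂ [−1,1]^3 be a finite set with weights w_ξ (ξ ∈ X) such that Σ_{ξ∈X} w_ξ q(ξ) = ∫_{[−1,1]^3} q dμ for every polynomial q of total degree ≤ 2n, and let h ∈ L²(dμ). Define m_α = ∫ h p_α dμ and λ_ξ = w_ξ Σ_{|α|≤n} p_α(ξ) m_α. Then the cubature formula Σ_{ξ∈X} λ_ξ f(ξ) = ∫_{[−1,1]^3} h(x) f(x) dμ holds exactly for every polynomial f of total degree ≤ n in three variables. -/

import Mathlib

open Real MeasureTheory

/-- The closed cube `[-1,1]³`. -/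
def cube3 : Set (Fin 3 → ℝ) := Set.univ.pi fun _ => Set.Icc (-1 : ℝ) 1

/-- The product Chebyshev probability measure `dμ = W₃(x) dx` on `[-1,1]³`,
`W₃(x) = π^{-3} ∏ᵢ (1 - xᵢ²)^{-1/2}`. -/
noncomputable def chebMeasure3 : Measure (Fin 3 → ℝ) :=
  (volume.restrict (Set.univ.pi fun _ : Fin 3 => Set.Ioo (-1 : ℝ) 1)).withDensity
    (fun x => ENNReal.ofReal (∏ i, (π * Real.sqrt (1 - (x i) ^ 2))⁻¹))

/-- The normalized Chebyshev functions `T̂_0 = 1`, `T̂_k(x) = √2 cos(k arccos x)` for `k ≥ 1`. -/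
noncomputable def That (k : ℕ) (x : ℝ) : ℝ :=
  if k = 0 then 1 else Real.sqrt 2 * Real.cos ((k : ℝ) * Real.arccos x)

/-- The product Chebyshev orthonormal basis `p_α(x) = T̂_{α₁}(x₁) T̂_{α₂}(x₂) T̂_{α₃}(x₃)`. -/
noncomputable def pCheb (α : Fin 3 → ℕ) (x : Fin 3 → ℝ) : ℝ :=
  ∏ s, That (α s) (x s)

/-- The index set `{α ∈ ℕ³ : |α| ≤ n}`. -/
def idx3 (n : ℕ) : Finset (Fin 3 → ℕ) :=
  (Fintype.piFinset fun _ => Finset.range (n + 1)).filter (fun α => ∑ s, α s ≤ n)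

/-!
The products `p_α`, `|α| ≤ n`, are orthonormal for `μ` (this is the orthogonality of the
Chebyshev polynomials `T_k` for the weight `(1 - t²)^{-1/2}`, coordinatewise) and, on the cube,
they are polynomials spanning `Π_n^3`, because `T̂_k` has degree exactly `k`. So a polynomial
`f = ∑ c_α p_α` of degree `≤ n` has `∫ p_α f dμ = c_α`, and exactness of the rule on
`p_α f ∈ Π_{2n}^3` gives `∑_ξ λ_ξ f(ξ) = ∑_α m_α ∫ p_α f dμ = ∑_α c_α m_α = ∫ h f dμ`.
-/

open scoped NNReal ENNReal
open Polynomial.Chebyshev (measureT)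

section Cubature

variable {Ω ι : Type*} [MeasurableSpace Ω] {μ : Measure Ω} {I : Finset ι} {p : ι → Ω → ℝ}

theorem integral_mul_eq_sum_of_ae_eq_sum {g f : Ω → ℝ} {c : ι → ℝ}
    (hf : f =ᵐ[μ] fun x => ∑ β ∈ I, c β * p β x)
    (hg : ∀ β ∈ I, Integrable (fun x => g x * p β x) μ) :
    ∫ x, g x * f x ∂μ = ∑ β ∈ I, c β * ∫ x, g x * p β x ∂μ := by
  have hgf : (fun x => g x * f x) =ᵐ[μ] fun x => ∑ β ∈ I, c β * (g x * p β x) := by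
    filter_upwards [hf] with x hx
    rw [hx, Finset.mul_sum]
    exact Finset.sum_congr rfl fun β _ => by ring
  rw [integral_congr_ae hgf, integral_finsetSum _ fun β hβ => (hg β hβ).const_mul (c β)]
  simp_rw [integral_const_mul]

theorem cubature_sum_eq_integral_mul_of_orthonormal [DecidableEq ι] {X : Finset Ω} {w : Ω → ℝ}
    {f h : Ω → ℝ} {c : ι → ℝ} (hp : ∀ α ∈ I, MemLp (p α) 2 μ)
    (horth : ∀ α ∈ I, ∀ β ∈ I, ∫ x, p α x * p β x ∂μ = if α = β then 1 else 0)
    (hf : f =ᵐ[μ] fun x => ∑ β ∈ I, c β * p β x)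
    (hexact : ∀ α ∈ I, ∑ ξ ∈ X, w ξ * (p α ξ * f ξ) = ∫ x, p α x * f x ∂μ)
    (hh : MemLp h 2 μ) :
    ∑ ξ ∈ X, (w ξ * ∑ α ∈ I, p α ξ * ∫ x, h x * p α x ∂μ) * f ξ = ∫ x, h x * f x ∂μ := by
  have hcoeff : ∀ α ∈ I, ∫ x, p α x * f x ∂μ = c α := by
    intro α hα
    rw [integral_mul_eq_sum_of_ae_eq_sum hf fun β hβ => (hp α hα).integrable_mul (hp β hβ),
      Finset.sum_congr rfl fun β hβ => by rw [horth α hα β hβ]]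
    simp [hα]
  calc ∑ ξ ∈ X, (w ξ * ∑ α ∈ I, p α ξ * ∫ x, h x * p α x ∂μ) * f ξ
      = ∑ α ∈ I, (∫ x, h x * p α x ∂μ) * ∑ ξ ∈ X, w ξ * (p α ξ * f ξ) := by
        simp_rw [Finset.mul_sum, Finset.sum_mul]
        rw [Finset.sum_comm]
        exact Finset.sum_congr rfl fun α _ => Finset.sum_congr rfl fun ξ _ => by ring
    _ = ∑ α ∈ I, c α * ∫ x, h x * p α x ∂μ :=
        Finset.sum_congr rfl fun α hα => by rw [hexact α hα, hcoeff α hα, mul_comm]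
    _ = ∫ x, h x * f x ∂μ :=
        (integral_mul_eq_sum_of_ae_eq_sum hf fun β hβ => hh.integrable_mul (hp β hβ)).symm

end Cubature

theorem integral_withDensity_pi_prod {ι α : Type*} [Fintype ι] [MeasurableSpace α]
    {μ : Measure α} [SigmaFinite μ] {ρ : α → ℝ≥0} (hρ : Measurable ρ) (g : ι → α → ℝ) :
    ∫ x, ∏ i, g i (x i)
        ∂(Measure.pi fun _ => μ).withDensity (fun x => ((∏ i, ρ (x i) : ℝ≥0) : ℝ≥0∞)) =
      ∏ i, ∫ t, g i t ∂μ.withDensity (fun t => (ρ t : ℝ≥0∞)) := by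
  rw [integral_withDensity_eq_integral_smul (by fun_prop)]
  simp_rw [integral_withDensity_eq_integral_smul hρ, NNReal.smul_def, smul_eq_mul, NNReal.coe_prod,
    ← Finset.prod_mul_distrib]
  exact integral_fintype_prod_eq_prod (fun i t => (ρ t : ℝ) * g i t)

noncomputable def chebDensity (t : ℝ) : ℝ≥0 := Real.toNNReal (π * Real.sqrt (1 - t ^ 2))⁻¹

noncomputable def chebMeasure1 : Measure ℝ :=
  (volume.restrict (Set.Ioo (-1) 1)).withDensity fun t => chebDensity t

theorem measurable_chebDensity : Measurable chebDensity := by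
  unfold chebDensity; fun_prop

theorem chebMeasure3_eq_withDensity_pi : chebMeasure3 =
    (Measure.pi fun _ => volume.restrict (Set.Ioo (-1 : ℝ) 1)).withDensity
      (fun x => ((∏ i, chebDensity (x i) : ℝ≥0) : ℝ≥0∞)) := by
  rw [chebMeasure3, volume_pi, ← Measure.restrict_pi_pi]
  congr 1
  funext x
  simp only [chebDensity]
  rw [← Real.toNNReal_prod_of_nonneg fun i _ => by positivity]
  rfl

theorem chebMeasure1_eq_smul_measureT : chebMeasure1 = ENNReal.ofReal π⁻¹ • measureT := by
  rw [measureT, restrict_withDensity measurableSet_Ioc, ← withDensity_smul _ (by fun_prop),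
    chebMeasure1, Measure.restrict_congr_set Ioo_ae_eq_Ioc]
  congr 1
  funext t
  -- `measureT`'s density `√(1 - t ^ 2)⁻¹` parses as `√((1 - t ^ 2)⁻¹)`
  simp only [chebDensity, Pi.smul_apply, smul_eq_mul, mul_inv, ← Real.sqrt_inv]
  change ENNReal.ofReal _ = _
  rw [ENNReal.ofReal_mul (by positivity), ENNReal.ofReal_eq_coe_nnreal (sqrt_nonneg _)]

theorem integral_chebMeasure3_prod (g : Fin 3 → ℝ → ℝ) :
    ∫ x, ∏ i, g i (x i) ∂chebMeasure3 = ∏ i, ∫ t, g i t ∂chebMeasure1 := by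
  rw [chebMeasure3_eq_withDensity_pi, integral_withDensity_pi_prod measurable_chebDensity]
  rfl

theorem integral_chebMeasure1 (g : ℝ → ℝ) :
    ∫ t, g t ∂chebMeasure1 = π⁻¹ * ∫ t, g t ∂measureT := by
  rw [chebMeasure1_eq_smul_measureT, integral_smul_measure, smul_eq_mul,
    ENNReal.toReal_ofReal (by positivity)]

theorem Polynomial.totalDegree_toMvPolynomial_le {R σ : Type*} [CommSemiring R] (i : σ)
    (p : Polynomial R) : (p.toMvPolynomial i).totalDegree ≤ p.natDegree := by
  conv_lhs => rw [p.as_sum_range_C_mul_X_pow]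
  simp only [map_sum, map_mul, Polynomial.toMvPolynomial_C, map_pow, Polynomial.toMvPolynomial_X,
    MvPolynomial.C_mul_X_pow_eq_monomial]
  refine (MvPolynomial.totalDegree_finsetSum _ _).trans (Finset.sup_le fun j hj => ?_)
  refine (MvPolynomial.totalDegree_monomial_le _ _).trans ?_
  simpa [Nat.lt_succ_iff] using hj

namespace Polynomial.Sequence

open Polynomial Submodule

variable {R σ : Type*} [CommRing R] (S : Sequence R)

theorem exists_X_pow_eq_sum (hS : ∀ i, IsUnit (S i).leadingCoeff) (k : ℕ) :
    ∃ c : ℕ → R, (X : R[X]) ^ k = ∑ j ∈ Finset.range (k + 1), c j • S j := by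
  have hmem : (X : R[X]) ^ k ∈ span R (S '' Set.Iio (k + 1)) := by
    rw [S.span_degreeLT fun i _ => hS i, mem_degreeLT]
    exact (degree_X_pow_le k).trans_lt (by exact_mod_cast k.lt_succ_self)
  rw [← Finset.coe_range, mem_span_image_finset_iff_exists_fun'] at hmem
  obtain ⟨c, hc⟩ := hmem
  exact ⟨c, hc.symm⟩

variable [Fintype σ]

noncomputable def mvProd (α : σ → ℕ) : MvPolynomial σ R :=
  ∏ i, (S (α i)).toMvPolynomial i

theorem eval_mvProd (α : σ → ℕ) (x : σ → R) :
    MvPolynomial.eval x (S.mvProd α) = ∏ i, (S (α i)).eval (x i) := by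
  simp [mvProd]

theorem totalDegree_mvProd_le (α : σ → ℕ) : (S.mvProd α).totalDegree ≤ ∑ i, α i :=
  (MvPolynomial.totalDegree_finsetProd _ _).trans <| Finset.sum_le_sum fun _ _ =>
    (totalDegree_toMvPolynomial_le _ _).trans (S.natDegree_eq _).le

theorem mem_span_mvProd (hS : ∀ i, IsUnit (S i).leadingCoeff) {n : ℕ} {f : MvPolynomial σ R}
    (hf : f.totalDegree ≤ n) : f ∈ span R (S.mvProd '' {α | ∑ i, α i ≤ n}) := by
  classical
  rw [f.as_sum]
  refine sum_mem fun d hd => ?_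
  have hdn : ∑ i, d i ≤ n := by
    simpa [Finsupp.sum_fintype] using (MvPolynomial.le_totalDegree hd).trans hf
  rw [MvPolynomial.monomial_eq, Finsupp.prod_fintype _ _ fun _ => pow_zero _,
    ← MvPolynomial.smul_eq_C_mul]
  refine smul_mem _ _ ?_
  choose c hc using S.exists_X_pow_eq_sum hS
  have hprod : ∏ i, MvPolynomial.X i ^ d i =
      ∑ γ ∈ Fintype.piFinset fun i => Finset.range (d i + 1),
        (∏ i, c (d i) (γ i)) • S.mvProd γ := by
    simp_rw [← toMvPolynomial_X (R := R), ← map_pow, hc, map_sum, map_smul, Finset.prod_univ_sum,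
      Finset.prod_smul, mvProd]
  rw [hprod]
  refine sum_mem fun γ hγ => smul_mem _ _ (subset_span ⟨γ, ?_, rfl⟩)
  simp only [Fintype.mem_piFinset, Finset.mem_range, Nat.lt_succ_iff] at hγ
  exact (Finset.sum_le_sum fun i _ => hγ i).trans hdn

end Polynomial.Sequence

section Chebyshev

open Polynomial Polynomial.Chebyshev

noncomputable def chebHat (k : ℕ) : ℝ[X] := C (if k = 0 then 1 else √2) * T ℝ k

theorem eval_chebHat {t : ℝ} (ht : t ∈ Set.Icc (-1) 1) (k : ℕ) : (chebHat k).eval t = That k t := by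
  have hT : (T ℝ k).eval t = Real.cos (k * Real.arccos t) := by
    conv_lhs => rw [← Real.cos_arccos ht.1 ht.2]
    simp [T_real_cos]
  rw [chebHat, eval_mul, eval_C, hT, That]
  split_ifs with hk <;> simp [hk]

theorem integral_eval_chebHat_mul_eval_chebHat_measureT (j k : ℕ) :
    ∫ t, (chebHat j).eval t * (chebHat k).eval t ∂measureT = if j = k then π else 0 := by
  simp_rw [chebHat, eval_mul, eval_C, mul_mul_mul_comm _ ((T ℝ j).eval _), integral_const_mul]
  rcases eq_or_ne j k with rfl | hjk
  · rcases eq_or_ne j 0 with rfl | hj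
    · simpa using integral_eval_T_real_mul_self_measureT_zero
    · rw [integral_T_real_mul_self_measureT_of_ne_zero hj]
      simp [hj]
      ring
  · simp [integral_eval_T_real_mul_eval_T_real_measureT_of_ne hjk, hjk]

theorem ae_measureT_mem_Icc : ∀ᵐ t ∂measureT, t ∈ Set.Icc (-1 : ℝ) 1 :=
  (ae_restrict_mem measurableSet_Ioc).mono fun _ ht => Set.Ioc_subset_Icc_self ht

theorem integral_That_mul_That_chebMeasure1 (j k : ℕ) :
    ∫ t, That j t * That k t ∂chebMeasure1 = if j = k then 1 else 0 := by
  have hae : (fun t => That j t * That k t) =ᵐ[measureT]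
      fun t => (chebHat j).eval t * (chebHat k).eval t := by
    filter_upwards [ae_measureT_mem_Icc] with t ht
    rw [eval_chebHat ht, eval_chebHat ht]
  rw [integral_chebMeasure1, integral_congr_ae hae, integral_eval_chebHat_mul_eval_chebHat_measureT]
  split_ifs <;> simp [pi_ne_zero]

theorem degree_chebHat (k : ℕ) : (chebHat k).degree = k := by
  rw [chebHat, degree_C_mul (by split_ifs <;> positivity), degree_T]
  rfl

theorem leadingCoeff_chebHat_ne_zero (k : ℕ) : (chebHat k).leadingCoeff ≠ 0 := by
  rw [Ne, leadingCoeff_eq_zero, ← degree_eq_bot, degree_chebHat]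
  exact WithBot.natCast_ne_bot k

noncomputable def chebHatSeq : Sequence ℝ := ⟨chebHat, degree_chebHat⟩

theorem isUnit_leadingCoeff_chebHatSeq (k : ℕ) : IsUnit (chebHatSeq k).leadingCoeff :=
  (leadingCoeff_chebHat_ne_zero k).isUnit

theorem eval_chebHatSeq_mvProd {x : Fin 3 → ℝ} (hx : x ∈ cube3) (α : Fin 3 → ℕ) :
    MvPolynomial.eval x (chebHatSeq.mvProd α) = pCheb α x := by
  rw [Sequence.eval_mvProd, pCheb]
  exact Finset.prod_congr rfl fun i _ => eval_chebHat (hx i (Set.mem_univ i)) (α i)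

end Chebyshev

theorem integral_pCheb_mul_pCheb (α β : Fin 3 → ℕ) :
    ∫ x, pCheb α x * pCheb β x ∂chebMeasure3 = if α = β then 1 else 0 := by
  simp_rw [pCheb, ← Finset.prod_mul_distrib]
  rw [integral_chebMeasure3_prod fun i t => That (α i) t * That (β i) t]
  simp_rw [integral_That_mul_That_chebMeasure1]
  rw [Finset.prod_boole]
  simp [funext_iff]

instance : IsProbabilityMeasure chebMeasure3 := by
  have hone : ∫ _, (1 : ℝ) ∂chebMeasure3 = 1 := by
    simpa [pCheb, That] using integral_pCheb_mul_pCheb 0 0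
  rw [integral_const, smul_eq_mul, mul_one, measureReal_def, ENNReal.toReal_eq_one_iff] at hone
  exact ⟨hone⟩

theorem ae_chebMeasure3_mem_cube3 : ∀ᵐ x ∂chebMeasure3, x ∈ cube3 :=
  Filter.Eventually.mono ((withDensity_absolutelyContinuous _ _).ae_le
    (ae_restrict_mem (MeasurableSet.univ_pi fun _ => measurableSet_Ioo)))
    fun _ hx => Set.pi_mono (fun _ _ => Set.Ioo_subset_Icc_self) hx

theorem continuous_That (k : ℕ) : Continuous (That k) := by
  unfold That; split_ifs <;> fun_prop

theorem continuous_pCheb (α : Fin 3 → ℕ) : Continuous (pCheb α) :=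
  continuous_finsetProd _ fun i _ => (continuous_That _).comp (continuous_apply i)

theorem abs_That_le (k : ℕ) (t : ℝ) : |That k t| ≤ √2 := by
  unfold That
  split_ifs
  · rw [abs_one]
    exact Real.one_le_sqrt.mpr one_le_two
  · rw [abs_mul, abs_of_nonneg (sqrt_nonneg 2)]
    exact mul_le_of_le_one_right (sqrt_nonneg 2) (abs_cos_le_one _)

theorem memLp_pCheb (α : Fin 3 → ℕ) (p : ℝ≥0∞) : MemLp (pCheb α) p chebMeasure3 := by
  refine MemLp.of_bound (continuous_pCheb α).aestronglyMeasurable (√2 ^ 3) (ae_of_all _ fun x => ?_)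
  rw [Real.norm_eq_abs, pCheb, Finset.abs_prod]
  calc ∏ i, |That (α i) (x i)| ≤ ∏ _i : Fin 3, √2 :=
        Finset.prod_le_prod (fun _ _ => abs_nonneg _) fun i _ => abs_That_le _ _
    _ = √2 ^ 3 := by simp

theorem coe_idx3 (n : ℕ) : (idx3 n : Set (Fin 3 → ℕ)) = {α | ∑ i, α i ≤ n} := by
  ext α
  simp only [idx3, Finset.coe_filter, Fintype.mem_piFinset, Finset.mem_range, Set.mem_ofPred_eq,
    and_iff_right_iff_imp]
  exact fun hα i => Nat.lt_succ_of_le ((Finset.single_le_sum (fun _ _ => Nat.zero_le _)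
    (Finset.mem_univ i)).trans hα)

theorem totalDegree_chebHatSeq_mvProd_mul_le {n : ℕ} {α : Fin 3 → ℕ} (hα : α ∈ idx3 n)
    {f : MvPolynomial (Fin 3) ℝ} (hf : f.totalDegree ≤ n) :
    (chebHatSeq.mvProd α * f).totalDegree ≤ 2 * n := by
  have hαn : ∑ i, α i ≤ n := (Finset.mem_filter.mp hα).2
  have := chebHatSeq.totalDegree_mvProd_le α
  have := MvPolynomial.totalDegree_mul (chebHatSeq.mvProd α) f
  omega

/-- Exactness of the product cubature obtained by integrating the hyperinterpolant
against `h ∈ L²(dμ)`: with orthogonal moments `m_α = ∫ h p_α dμ` and weights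
`λ_ξ = w_ξ ∑_{|α|≤n} p_α(ξ) m_α`, the formula `∑_{ξ∈X} λ_ξ f(ξ) = ∫ h f dμ`
holds for every polynomial `f` of total degree `≤ n`. -/
theorem product_cubature_exact (n : ℕ)
    (X : Finset (Fin 3 → ℝ)) (hX : ∀ ξ ∈ X, ξ ∈ cube3)
    (w : (Fin 3 → ℝ) → ℝ)
    (hexact : ∀ q : MvPolynomial (Fin 3) ℝ, q.totalDegree ≤ 2 * n →
      ∑ ξ ∈ X, w ξ * MvPolynomial.eval ξ q = ∫ x, MvPolynomial.eval x q ∂chebMeasure3)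
    (h : (Fin 3 → ℝ) → ℝ) (hh : MemLp h 2 chebMeasure3)
    (f : MvPolynomial (Fin 3) ℝ) (hf : f.totalDegree ≤ n) :
    ∑ ξ ∈ X,
        (w ξ * ∑ α ∈ idx3 n, pCheb α ξ * ∫ x, h x * pCheb α x ∂chebMeasure3) *
          MvPolynomial.eval ξ f =
      ∫ x, h x * MvPolynomial.eval x f ∂chebMeasure3 := by
  obtain ⟨c, hc⟩ : ∃ c : (Fin 3 → ℕ) → ℝ, ∑ β ∈ idx3 n, c β • chebHatSeq.mvProd β = f := by
    rw [← Submodule.mem_span_image_finset_iff_exists_fun', coe_idx3]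
    exact chebHatSeq.mem_span_mvProd isUnit_leadingCoeff_chebHatSeq hf
  have hexpand : (fun x => MvPolynomial.eval x f) =ᵐ[chebMeasure3]
      fun x => ∑ β ∈ idx3 n, c β * pCheb β x := by
    filter_upwards [ae_chebMeasure3_mem_cube3] with x hx
    simp [← hc, eval_chebHatSeq_mvProd hx]
  refine cubature_sum_eq_integral_mul_of_orthonormal (fun α _ => memLp_pCheb α 2)
    (fun α _ β _ => integral_pCheb_mul_pCheb α β) hexpand (fun α hα => ?_) hh
  calc ∑ ξ ∈ X, w ξ * (pCheb α ξ * MvPolynomial.eval ξ f)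
      = ∑ ξ ∈ X, w ξ * MvPolynomial.eval ξ (chebHatSeq.mvProd α * f) :=
        Finset.sum_congr rfl fun ξ hξ => by
          rw [MvPolynomial.eval_mul, eval_chebHatSeq_mvProd (hX ξ hξ)]
    _ = ∫ x, MvPolynomial.eval x (chebHatSeq.mvProd α * f) ∂chebMeasure3 :=
        hexact _ (totalDegree_chebHatSeq_mvProd_mul_le hα hf)
    _ = ∫ x, pCheb α x * MvPolynomial.eval x f ∂chebMeasure3 := by
        refine integral_congr_ae ?_
        filter_upwards [ae_chebMeasure3_mem_cube3] with x hx
        rw [MvPolynomial.eval_mul, eval_chebHatSeq_mvProd hx]
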